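/- (Part of proof of Theorem 2.) Let w⁽ᵐ⁾ be a sequence in W such that for some edge ij of T, lim_{m→∞} (w_i⁽ᵐ⁾ + w_j⁽ᵐ⁾) = −log cosh(l⁰_ij/2) (equivalently lim_{m→∞} l_ij(w⁽ᵐ⁾) = 0). Then for any face ijk containing the edge ij, lim_{m→∞} θ^i_jk(w⁽ᵐ⁾) = +∞, and consequently lim_{m→∞} B_i(w⁽ᵐ⁾) = +∞. -/

import Mathlib

open Real Filter Set

/-- Inverse hyperbolic cosine. -/
noncomputable def arcosh (x : ℝ) : ℝ := Real.log (x + Real.sqrt (x ^ 2 - 1))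

/-- The length of the side of a right-angled hyperbolic hexagon opposite the side of
length `x`, where the three pairwise non-adjacent sides have lengths `x, y, z`. -/
noncomputable def theta (x y z : ℝ) : ℝ :=
  _root_.arcosh ((Real.cosh x + Real.cosh y * Real.cosh z) / (Real.sinh y * Real.sinh z))

/-- Combinatorial data of an ideally triangulated compact surface with `n` boundary
components, together with a fixed hyperbolic metric `l⁰` assigning a positive length
to each edge.  Boundary components are indexed by `Fin n`; each face is a triple of
pairwise distinct boundary indices; every boundary index occurs in at least one face. -/
structure IdealTriangulatedSurface (n : ℕ) where
  /-- The set of faces (ideal triangles), each recorded by the triple of boundary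
  components it meets. -/
  F : Finset (Fin n × Fin n × Fin n)
  /-- The three boundary indices of a face are pairwise distinct. -/
  distinct : ∀ f ∈ F, f.1 ≠ f.2.1 ∧ f.2.1 ≠ f.2.2 ∧ f.2.2 ≠ f.1
  /-- Every boundary component meets some face. -/
  covers : ∀ i : Fin n, ∃ f ∈ F, i = f.1 ∨ i = f.2.1 ∨ i = f.2.2
  /-- The fixed hyperbolic metric: the length `l⁰_ij > 0` of the edge `ij`. -/
  l0 : Fin n → Fin n → ℝ
  l0_symm : ∀ i j, l0 i j = l0 j i
  l0_pos : ∀ i j, 0 < l0 i j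

namespace IdealTriangulatedSurface

variable {n : ℕ} (S : IdealTriangulatedSurface n)

/-- `i j` is an edge of the ideal triangulation: `i ≠ j` and some face contains
both boundary indices `i` and `j`. -/
def IsEdge (i j : Fin n) : Prop :=
  i ≠ j ∧ ∃ f ∈ S.F, (i = f.1 ∨ i = f.2.1 ∨ i = f.2.2) ∧ (j = f.1 ∨ j = f.2.1 ∨ j = f.2.2)

/-- The space `W` of combinatorial conformal factors: those `w : Fin n → ℝ` with
`w_i + w_j > −log cosh (l⁰_ij / 2)` for every edge `ij`, i.e. those for which every
deformed edge length `l_ij(w)` is defined and positive. -/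
def W : Set (Fin n → ℝ) :=
  {w | ∀ i j : Fin n, S.IsEdge i j →
    -Real.log (Real.cosh (S.l0 i j / 2)) < w i + w j}

/-- The deformed edge length `l_ij(w)`, defined by
`cosh (l_ij(w)/2) = e^{w_i + w_j} cosh (l⁰_ij/2)`. -/
noncomputable def len (w : Fin n → ℝ) (i j : Fin n) : ℝ :=
  2 * _root_.arcosh (Real.exp (w i + w j) * Real.cosh (S.l0 i j / 2))

/-- `θ^i_jk(w)`: the length of the boundary arc on boundary component `i` of the
right-angled hexagon realizing the face `ijk` in the metric determined by `w`. -/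
noncomputable def thetaF (w : Fin n → ℝ) (i j k : Fin n) : ℝ :=
  theta (S.len w j k) (S.len w k i) (S.len w i j)

/-- `B_i(w)`: the length of the boundary component `i`, the sum over all faces
containing `i` of the boundary arc `θ^i` of that face. -/
noncomputable def Blen (w : Fin n → ℝ) (i : Fin n) : ℝ :=
  ∑ f ∈ S.F,
    ((if i = f.1 then S.thetaF w f.1 f.2.1 f.2.2 else 0)
      + (if i = f.2.1 then S.thetaF w f.2.1 f.2.2 f.1 else 0)
      + (if i = f.2.2 then S.thetaF w f.2.2 f.1 f.2.1 else 0))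

end IdealTriangulatedSurface

/-!
Along the sequence the deformed length `z = l_ij` tends to `0` while `y = l_ki` stays positive.
In the hexagon formula `cosh θ = (cosh x + cosh y cosh z) / (sinh y sinh z)` the numerator is at
least `cosh y ≥ sinh y`, so `cosh θ ≥ 1 / sinh z → ∞`. Since every arc `θ` is nonnegative,
`B_i` dominates each of its summands and diverges as well.
-/

open Topology

theorem arcosh_eq_real_arcosh : _root_.arcosh = Real.arcosh := rfl

theorem exp_mul_eq_exp_add_log (s : ℝ) {c : ℝ} (hc : 0 < c) : exp s * c = exp (s + log c) := by
  rw [exp_add, exp_log hc]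

namespace Real

theorem tendsto_arcosh_atTop : Tendsto arcosh atTop atTop := by
  refine tendsto_atTop_mono' atTop ?_ tendsto_log_atTop
  filter_upwards [eventually_gt_atTop 0] with x hx
  exact log_le_log hx (le_add_of_nonneg_right (sqrt_nonneg _))

theorem continuousAt_arcosh_one : ContinuousAt arcosh 1 :=
  show ContinuousAt (fun x => log (x + √(x ^ 2 - 1))) 1 from
    (continuousAt_id.add (by fun_prop)).log (by norm_num)

end Real

theorem one_le_theta_arg (x : ℝ) {y z : ℝ} (hy : 0 < y) (hz : 0 < z) :
    1 ≤ (cosh x + cosh y * cosh z) / (sinh y * sinh z) := by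
  rw [one_le_div (mul_pos (sinh_pos_iff.2 hy) (sinh_pos_iff.2 hz))]
  linarith [cosh_sub y z, one_le_cosh (y - z), one_le_cosh x]

theorem inv_sinh_le_theta_arg (x : ℝ) {y z : ℝ} (hy : 0 < y) (hz : 0 < z) :
    (sinh z)⁻¹ ≤ (cosh x + cosh y * cosh z) / (sinh y * sinh z) := by
  have hsy : 0 < sinh y := sinh_pos_iff.2 hy
  have hsz : 0 < sinh z := sinh_pos_iff.2 hz
  calc (sinh z)⁻¹ = sinh y / (sinh y * sinh z) := by field_simp
    _ ≤ (cosh x + cosh y * cosh z) / (sinh y * sinh z) := by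
      gcongr
      calc sinh y ≤ cosh y := (sinh_lt_cosh y).le
        _ ≤ cosh y * cosh z := le_mul_of_one_le_right (cosh_pos y).le (one_le_cosh z)
        _ ≤ cosh x + cosh y * cosh z := le_add_of_nonneg_left (cosh_pos x).le

theorem theta_nonneg (x : ℝ) {y z : ℝ} (hy : 0 < y) (hz : 0 < z) : 0 ≤ theta x y z :=
  arcosh_nonneg (one_le_theta_arg x hy hz)

theorem theta_comm (x y z : ℝ) : theta x y z = theta x z y := by
  rw [theta, theta, mul_comm (cosh y), mul_comm (sinh y)]

theorem tendsto_theta_atTop {α : Type*} {l : Filter α} {x y z : α → ℝ}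
    (hy : ∀ᶠ a in l, 0 < y a) (hz : Tendsto z l (𝓝[>] 0)) :
    Tendsto (fun a => theta (x a) (y a) (z a)) l atTop := by
  have hsinh : Tendsto (fun a => sinh (z a)) l (𝓝[>] 0) := by
    refine tendsto_nhdsWithin_iff.2 ⟨?_, ?_⟩
    · exact (continuous_sinh.tendsto' 0 0 sinh_zero).comp (tendsto_nhds_of_tendsto_nhdsWithin hz)
    · filter_upwards [tendsto_nhdsWithin_iff.1 hz |>.2] with a ha
      exact sinh_pos_iff.2 ha
  have harg : Tendsto (fun a => (cosh (x a) + cosh (y a) * cosh (z a)) / (sinh (y a) * sinh (z a)))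
      l atTop := by
    refine tendsto_atTop_mono' l ?_ (tendsto_inv_nhdsGT_zero.comp hsinh)
    filter_upwards [hy, tendsto_nhdsWithin_iff.1 hz |>.2] with a hya hza
    exact inv_sinh_le_theta_arg (x a) hya hza
  exact tendsto_arcosh_atTop.comp harg

namespace IdealTriangulatedSurface

variable {n : ℕ} (S : IdealTriangulatedSurface n)

def IsFace (i j k : Fin n) : Prop :=
  (i, j, k) ∈ S.F ∨ (j, k, i) ∈ S.F ∨ (k, i, j) ∈ S.F ∨
    (i, k, j) ∈ S.F ∨ (k, j, i) ∈ S.F ∨ (j, i, k) ∈ S.F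

theorem IsEdge.symm {S : IdealTriangulatedSurface n} {i j : Fin n} (h : S.IsEdge i j) :
    S.IsEdge j i :=
  ⟨h.1.symm, h.2.imp fun _ hf => ⟨hf.1, hf.2.2, hf.2.1⟩⟩

theorem isEdge_of_mem_F {f : Fin n × Fin n × Fin n} (hf : f ∈ S.F) :
    S.IsEdge f.1 f.2.1 ∧ S.IsEdge f.2.1 f.2.2 ∧ S.IsEdge f.2.2 f.1 := by
  obtain ⟨d₁, d₂, d₃⟩ := S.distinct f hf
  exact ⟨⟨d₁, f, hf, by tauto, by tauto⟩, ⟨d₂, f, hf, by tauto, by tauto⟩,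
    ⟨d₃, f, hf, by tauto, by tauto⟩⟩

theorem IsFace.isEdge {i j k : Fin n} (h : S.IsFace i j k) :
    S.IsEdge i j ∧ S.IsEdge j k ∧ S.IsEdge k i := by
  rcases h with h | h | h | h | h | h <;> obtain ⟨e₁, e₂, e₃⟩ := S.isEdge_of_mem_F h
  · exact ⟨e₁, e₂, e₃⟩
  · exact ⟨e₃, e₁, e₂⟩
  · exact ⟨e₂, e₃, e₁⟩
  · exact ⟨e₃.symm, e₂.symm, e₁.symm⟩
  · exact ⟨e₂.symm, e₁.symm, e₃.symm⟩
  · exact ⟨e₁.symm, e₃.symm, e₂.symm⟩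

theorem len_pos {w : Fin n → ℝ} (hw : w ∈ S.W) {i j : Fin n} (h : S.IsEdge i j) :
    0 < S.len w i j := by
  have hsum : 0 < w i + w j + log (cosh (S.l0 i j / 2)) := by linarith [hw i j h]
  rw [len, arcosh_eq_real_arcosh, exp_mul_eq_exp_add_log _ (cosh_pos _)]
  exact mul_pos two_pos (arcosh_pos (one_lt_exp_iff.2 hsum))

theorem len_comm (w : Fin n → ℝ) (i j : Fin n) : S.len w i j = S.len w j i := by
  rw [len, len, add_comm (w i), S.l0_symm]

theorem tendsto_len_nhds_zero {α : Type*} {l : Filter α} {w : α → Fin n → ℝ} {i j : Fin n}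
    (h : Tendsto (fun a => w a i + w a j) l (𝓝 (-log (cosh (S.l0 i j / 2))))) :
    Tendsto (fun a => S.len (w a) i j) l (𝓝 0) := by
  have hcosh : Tendsto (fun a => exp (w a i + w a j) * cosh (S.l0 i j / 2)) l (𝓝 1) := by
    have hsum := h.add_const (log (cosh (S.l0 i j / 2)))
    rw [neg_add_cancel] at hsum
    simp_rw [exp_mul_eq_exp_add_log _ (cosh_pos _)]
    exact (continuous_exp.tendsto' 0 1 exp_zero).comp hsum
  simpa [len, arcosh_eq_real_arcosh] using (continuousAt_arcosh_one.tendsto.comp hcosh).const_mul 2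

theorem thetaF_comm (w : Fin n → ℝ) (i j k : Fin n) : S.thetaF w i j k = S.thetaF w i k j := by
  rw [thetaF, thetaF, theta_comm, S.len_comm w j k, S.len_comm w k i, S.len_comm w i j]

theorem thetaF_nonneg {w : Fin n → ℝ} (hw : w ∈ S.W) {i j k : Fin n}
    (hki : S.IsEdge k i) (hij : S.IsEdge i j) : 0 ≤ S.thetaF w i j k :=
  theta_nonneg _ (S.len_pos hw hki) (S.len_pos hw hij)

theorem thetaF_le_Blen {w : Fin n → ℝ} (hw : w ∈ S.W) {i j k : Fin n}
    (hface : S.IsFace i j k) : S.thetaF w i j k ≤ S.Blen w i := by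
  have hterm : ∀ f ∈ S.F, 0 ≤ (if i = f.1 then S.thetaF w f.1 f.2.1 f.2.2 else 0)
      + (if i = f.2.1 then S.thetaF w f.2.1 f.2.2 f.1 else 0)
      + (if i = f.2.2 then S.thetaF w f.2.2 f.1 f.2.1 else 0) := by
    intro f hf
    obtain ⟨e₁, e₂, e₃⟩ := S.isEdge_of_mem_F hf
    exact add_nonneg (add_nonneg (ite_nonneg (S.thetaF_nonneg hw e₃ e₁) le_rfl)
      (ite_nonneg (S.thetaF_nonneg hw e₁ e₂) le_rfl)) (ite_nonneg (S.thetaF_nonneg hw e₂ e₃) le_rfl)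
  rcases hface with h | h | h | h | h | h <;>
    refine le_trans ?_ (Finset.single_le_sum hterm h) <;>
    obtain ⟨d₁, d₂, d₃⟩ := S.distinct _ h
  · simp [d₁, d₃.symm]
  · simp [d₃, d₂.symm]
  · simp [d₁.symm, d₂]
  · rw [S.thetaF_comm]; simp [d₁, d₃.symm]
  · rw [S.thetaF_comm]; simp [d₃, d₂.symm]
  · rw [S.thetaF_comm]; simp [d₁.symm, d₂]

end IdealTriangulatedSurface

theorem stmt_13_general {n : ℕ} (S : IdealTriangulatedSurface n)
    (w : ℕ → (Fin n → ℝ)) (hw : ∀ m, w m ∈ S.W) (i j k : Fin n)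
    (hface : (i, j, k) ∈ S.F ∨ (j, k, i) ∈ S.F ∨ (k, i, j) ∈ S.F ∨
             (i, k, j) ∈ S.F ∨ (k, j, i) ∈ S.F ∨ (j, i, k) ∈ S.F)
    (hlim : Filter.Tendsto (fun m => w m i + w m j) Filter.atTop
      (nhds (-Real.log (Real.cosh (S.l0 i j / 2))))) :
    Filter.Tendsto (fun m => S.thetaF (w m) i j k) Filter.atTop Filter.atTop ∧
    Filter.Tendsto (fun m => S.Blen (w m) i) Filter.atTop Filter.atTop := by
  have hface : S.IsFace i j k := hface
  obtain ⟨hij, -, hki⟩ := hface.isEdge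
  have hlen : Tendsto (fun m => S.len (w m) i j) atTop (𝓝[>] 0) :=
    tendsto_nhdsWithin_iff.2
      ⟨S.tendsto_len_nhds_zero hlim, .of_forall fun m => S.len_pos (hw m) hij⟩
  have hθ : Tendsto (fun m => S.thetaF (w m) i j k) atTop atTop :=
    tendsto_theta_atTop (.of_forall fun m => S.len_pos (hw m) hki) hlen
  exact ⟨hθ, tendsto_atTop_mono (fun m => S.thetaF_le_Blen (hw m) hface) hθ⟩

/-- part of the proof of Theorem 2: if `w⁽ᵐ⁾` is a sequence in `W`,
`ijk` is a face of `T` (in some order), and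
`w_i⁽ᵐ⁾ + w_j⁽ᵐ⁾ → −log cosh (l⁰_ij/2)` (i.e. `l_ij(w⁽ᵐ⁾) → 0`), then
`θ^i_jk(w⁽ᵐ⁾) → +∞` and consequently `B_i(w⁽ᵐ⁾) → +∞`. -/
theorem stmt_13 {n : ℕ} (hn : 1 ≤ n) (S : IdealTriangulatedSurface n)
    (w : ℕ → (Fin n → ℝ)) (hw : ∀ m, w m ∈ S.W) (i j k : Fin n)
    (hface : (i, j, k) ∈ S.F ∨ (j, k, i) ∈ S.F ∨ (k, i, j) ∈ S.F ∨
             (i, k, j) ∈ S.F ∨ (k, j, i) ∈ S.F ∨ (j, i, k) ∈ S.F)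
    (hlim : Filter.Tendsto (fun m => w m i + w m j) Filter.atTop
      (nhds (-Real.log (Real.cosh (S.l0 i j / 2))))) :
    Filter.Tendsto (fun m => S.thetaF (w m) i j k) Filter.atTop Filter.atTop ∧
    Filter.Tendsto (fun m => S.Blen (w m) i) Filter.atTop Filter.atTop :=
  stmt_13_general S w hw i j k hface hlim
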